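/- arXiv:1105.0854 — 8 statements merged into one kernel-verified Lean document; each statement's English description precedes it below -/
import Mathlib

section
/- Let φ: ℝ≥0 → ℝ≥0 be non-decreasing with φ(t)/2 ≤ φ(t/2) for all t ≥ 0. Let T : E → F be a bijection between normed spaces such that ‖Tx − Ty‖ ≤ φ(‖x−y‖) and ‖T⁻¹f − T⁻¹g‖ ≤ φ(‖f−g‖) for all x,y ∈ E and f,g ∈ F. Then for all a, b ∈ E and all n ∈ ℕ, ‖T((a+b)/2) − (Ta+Tb)/2‖ ≤ φ^(2^(n+1)−1)(‖a−b‖/2^(n+1)), where φ^k denotes the k-fold composition of φ with itself. -/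
/-!
Let `c` be the midpoint of `T a` and `T b` and `m` the midpoint of `a` and `b`. Reflecting through
`c` and pulling back by `T` gives a `φ ∘ φ`-isometry `R` of `E` that swaps `a` and `b`, so the
midpoint defect of `R` at `a, b` is `‖R m - m‖`. The reflection moves `T m` by twice its distance
to `c`, hence the defect of `T` is at most `φ (‖R m - m‖) / 2`. Recursing on `R` with `φ ∘ φ` in
place of `φ`, and using `φ t / 2 ≤ φ (t / 2)` to move each halving inside the iterate, gives the
bound.
-/

open Set Function

structure IsAdmissibleGauge (φ : ℝ → ℝ) : Prop where
  monotoneOn : MonotoneOn φ (Ici 0)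
  div_two_le : ∀ t ≥ (0 : ℝ), φ t / 2 ≤ φ (t / 2)

namespace IsAdmissibleGauge

variable {φ ψ : ℝ → ℝ}

theorem mapsTo (hφ : IsAdmissibleGauge φ) : MapsTo φ (Ici 0) (Ici 0) := by
  intro t (ht : 0 ≤ t)
  have h0 : φ 0 / 2 ≤ φ 0 := by simpa using hφ.div_two_le 0 le_rfl
  exact (by linarith : (0 : ℝ) ≤ φ 0).trans (hφ.monotoneOn self_mem_Ici ht ht)

theorem id : IsAdmissibleGauge id :=
  ⟨monotoneOn_id, fun _ _ => le_rfl⟩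

theorem comp (hφ : IsAdmissibleGauge φ) (hψ : IsAdmissibleGauge ψ) :
    IsAdmissibleGauge (φ ∘ ψ) where
  monotoneOn := hφ.monotoneOn.comp hψ.monotoneOn hψ.mapsTo
  div_two_le t ht := by
    have hψt : 0 ≤ ψ t := hψ.mapsTo ht
    calc φ (ψ t) / 2 ≤ φ (ψ t / 2) := hφ.div_two_le _ hψt
      _ ≤ φ (ψ (t / 2)) := hφ.monotoneOn (by positivity : (0 : ℝ) ≤ ψ t / 2)
          (hψ.mapsTo (by positivity : (0 : ℝ) ≤ t / 2)) (hψ.div_two_le t ht)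

theorem iterate (hφ : IsAdmissibleGauge φ) (k : ℕ) : IsAdmissibleGauge φ^[k] := by
  induction k with
  | zero => exact IsAdmissibleGauge.id
  | succ k ih => rw [iterate_succ']; exact hφ.comp ih

theorem div_two_le_iterate_of_le (hφ : IsAdmissibleGauge φ) {d t : ℝ} (hd : 0 ≤ d)
    (ht : 0 ≤ t) (n : ℕ) (h : d ≤ (φ ∘ φ)^[2 ^ (n + 1) - 1] (t / 2 ^ (n + 1))) :
    φ d / 2 ≤ φ^[2 ^ (n + 2) - 1] (t / 2 ^ (n + 2)) := by
  set s := t / 2 ^ (n + 1)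
  have hs : 0 ≤ s := by positivity
  have hexp : 2 ^ (n + 2) - 1 = 2 * (2 ^ (n + 1) - 1) + 1 := by
    have : 1 ≤ 2 ^ (n + 1) := Nat.one_le_two_pow
    rw [pow_succ]
    omega
  have hφd : φ d ≤ φ^[2 ^ (n + 2) - 1] s := by
    rw [show φ ∘ φ = φ^[2] from rfl, ← iterate_mul] at h
    rw [hexp, iterate_succ_apply']
    exact hφ.monotoneOn hd ((hφ.iterate _).mapsTo hs) h
  calc φ d / 2 ≤ φ^[2 ^ (n + 2) - 1] s / 2 := by linarith
    _ ≤ φ^[2 ^ (n + 2) - 1] (s / 2) := (hφ.iterate _).div_two_le s hs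
    _ = φ^[2 ^ (n + 2) - 1] (t / 2 ^ (n + 2)) := by rw [div_div, ← pow_succ]

end IsAdmissibleGauge

namespace Equiv

section PseudoMetric

variable {P Q S : Type*} [PseudoMetricSpace P] [PseudoMetricSpace Q] [PseudoMetricSpace S]
  {φ : ℝ → ℝ}

structure IsPhiIsometry (φ : ℝ → ℝ) (e : P ≃ Q) : Prop where
  dist_le : ∀ x y, dist (e x) (e y) ≤ φ (dist x y)
  dist_symm_le : ∀ x y, dist (e.symm x) (e.symm y) ≤ φ (dist x y)

namespace IsPhiIsometry

theorem symm {e : P ≃ Q} (he : e.IsPhiIsometry φ) : e.symm.IsPhiIsometry φ :=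
  ⟨he.dist_symm_le, he.dist_le⟩

theorem trans_isometryEquiv {e : P ≃ Q} (he : e.IsPhiIsometry φ) (g : Q ≃ᵢ S) :
    (e.trans g.toEquiv).IsPhiIsometry φ where
  dist_le x y := by simpa [g.dist_eq] using he.dist_le x y
  dist_symm_le x y := by simpa [g.symm.dist_eq] using he.dist_symm_le (g.symm x) (g.symm y)

theorem trans {e : P ≃ Q} {f : Q ≃ S} (he : e.IsPhiIsometry φ) (hf : f.IsPhiIsometry φ)
    (hφ : IsAdmissibleGauge φ) : (e.trans f).IsPhiIsometry (φ ∘ φ) where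
  dist_le x y := (hf.dist_le (e x) (e y)).trans <|
    hφ.monotoneOn dist_nonneg (hφ.mapsTo dist_nonneg) (he.dist_le x y)
  dist_symm_le x y := (he.dist_symm_le (f.symm x) (f.symm y)).trans <|
    hφ.monotoneOn dist_nonneg (hφ.mapsTo dist_nonneg) (hf.dist_symm_le x y)

end IsPhiIsometry

end PseudoMetric

section Reflection

variable {W P Q : Type*} [SeminormedAddCommGroup W] [NormedSpace ℝ W] [PseudoMetricSpace Q]
  [NormedAddTorsor W Q]

noncomputable def conjMidpointReflection (e : P ≃ Q) (a b : P) : P ≃ P :=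
  let σ := AffineIsometryEquiv.pointReflection ℝ (midpoint ℝ (e a) (e b))
  (e.trans σ.toIsometryEquiv.toEquiv).trans e.symm

@[simp]
theorem apply_conjMidpointReflection (e : P ≃ Q) (a b x : P) :
    e (e.conjMidpointReflection a b x) =
      AffineIsometryEquiv.pointReflection ℝ (midpoint ℝ (e a) (e b)) (e x) := by
  simp [conjMidpointReflection]

theorem conjMidpointReflection_left (e : P ≃ Q) (a b : P) : e.conjMidpointReflection a b a = b :=
  e.injective (by simp [AffineIsometryEquiv.pointReflection_midpoint_left])

theorem conjMidpointReflection_right (e : P ≃ Q) (a b : P) : e.conjMidpointReflection a b b = a :=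
  e.injective (by simp [AffineIsometryEquiv.pointReflection_midpoint_right])

end Reflection

namespace IsPhiIsometry

variable {V W P Q : Type*} [SeminormedAddCommGroup V] [NormedSpace ℝ V] [PseudoMetricSpace P]
  [NormedAddTorsor V P] [SeminormedAddCommGroup W] [NormedSpace ℝ W] [PseudoMetricSpace Q]
  [NormedAddTorsor W Q] {φ : ℝ → ℝ}

theorem conjMidpointReflection (hφ : IsAdmissibleGauge φ) {e : P ≃ Q} (he : e.IsPhiIsometry φ)
    (a b : P) : (e.conjMidpointReflection a b).IsPhiIsometry (φ ∘ φ) :=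
  (he.trans_isometryEquiv _).trans he.symm hφ

theorem dist_map_midpoint_le {e : P ≃ Q} (he : e.IsPhiIsometry φ) (a b : P) :
    dist (e (midpoint ℝ a b)) (midpoint ℝ (e a) (e b)) ≤ φ (dist a b / 2) := by
  set m := midpoint ℝ a b
  have hma : dist m a = dist a b / 2 := by simp [m, dist_midpoint_left, div_eq_inv_mul]
  have hmb : dist m b = dist a b / 2 := by simp [m, dist_midpoint_right, div_eq_inv_mul]
  calc dist (e m) (midpoint ℝ (e a) (e b))
      = dist (midpoint ℝ (e m) (e m)) (midpoint ℝ (e a) (e b)) := by rw [midpoint_self]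
    _ ≤ (dist (e m) (e a) + dist (e m) (e b)) / ‖(2 : ℝ)‖ := dist_midpoint_midpoint_le' _ _ _ _
    _ ≤ (φ (dist m a) + φ (dist m b)) / 2 := by
      rw [Real.norm_two]
      gcongr <;> apply he.dist_le
    _ = φ (dist a b / 2) := by rw [hma, hmb, add_self_div_two]

theorem dist_map_midpoint_le_of_conj {e : P ≃ Q} (he : e.IsPhiIsometry φ) (a b : P) :
    dist (e (midpoint ℝ a b)) (midpoint ℝ (e a) (e b)) ≤
      φ (dist (e.conjMidpointReflection a b (midpoint ℝ a b))
        (midpoint ℝ (e.conjMidpointReflection a b a) (e.conjMidpointReflection a b b))) / 2 := by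
  set R := e.conjMidpointReflection a b
  set m := midpoint ℝ a b
  have hRm : midpoint ℝ (R a) (R b) = m := by
    rw [conjMidpointReflection_left, conjMidpointReflection_right, midpoint_comm]
  have hmove : dist (e (R m)) (e m) = 2 * dist (e m) (midpoint ℝ (e a) (e b)) := by
    rw [apply_conjMidpointReflection, AffineIsometryEquiv.dist_pointReflection_self_real,
      dist_comm]
  rw [hRm]
  linarith [he.dist_le (R m) m]

-- The recursion only ever produces self-maps of `P`, so the induction runs over those.
theorem dist_map_midpoint_le_iterate_of_perm (hφ : IsAdmissibleGauge φ) {e : P ≃ P}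
    (he : e.IsPhiIsometry φ) (a b : P) (n : ℕ) :
    dist (e (midpoint ℝ a b)) (midpoint ℝ (e a) (e b)) ≤
      φ^[2 ^ (n + 1) - 1] (dist a b / 2 ^ (n + 1)) := by
  induction n generalizing φ e with
  | zero => simpa using he.dist_map_midpoint_le a b
  | succ n ih =>
    exact (he.dist_map_midpoint_le_of_conj a b).trans <| hφ.div_two_le_iterate_of_le dist_nonneg
      dist_nonneg n (ih (hφ.comp hφ) (he.conjMidpointReflection hφ a b))

theorem dist_map_midpoint_le_iterate (hφ : IsAdmissibleGauge φ) {e : P ≃ Q}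
    (he : e.IsPhiIsometry φ) (a b : P) (n : ℕ) :
    dist (e (midpoint ℝ a b)) (midpoint ℝ (e a) (e b)) ≤
      φ^[2 ^ (n + 1) - 1] (dist a b / 2 ^ (n + 1)) := by
  cases n with
  | zero => simpa using he.dist_map_midpoint_le a b
  | succ n =>
    exact (he.dist_map_midpoint_le_of_conj a b).trans <| hφ.div_two_le_iterate_of_le dist_nonneg
      dist_nonneg n
        ((he.conjMidpointReflection hφ a b).dist_map_midpoint_le_iterate_of_perm (hφ.comp hφ) a b n)

end IsPhiIsometry

end Equiv

theorem midpoint_estimate_iterated_general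
    {E F : Type*} [NormedAddCommGroup E] [NormedSpace ℝ E]
    [NormedAddCommGroup F] [NormedSpace ℝ F]
    (φ : ℝ → ℝ) (hφmono : MonotoneOn φ (Set.Ici 0))
    (hφhalf : ∀ t ≥ (0:ℝ), φ t / 2 ≤ φ (t / 2))
    (T : E → F) (hbij : Function.Bijective T)
    (hT : ∀ x y : E, ‖T x - T y‖ ≤ φ ‖x - y‖)
    (hTinv : ∀ f g : F, ‖Function.invFun T f - Function.invFun T g‖ ≤ φ ‖f - g‖)
    (a b : E) (n : ℕ) :
    ‖T ((2:ℝ)⁻¹ • (a + b)) - (2:ℝ)⁻¹ • (T a + T b)‖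
      ≤ φ^[2 ^ (n + 1) - 1] (‖a - b‖ / 2 ^ (n + 1)) := by
  let e := Equiv.ofBijective T hbij
  have he_symm : ⇑e.symm = invFun T :=
    funext fun f => e.symm_apply_eq.2 (invFun_eq (hbij.2 f)).symm
  have he : e.IsPhiIsometry φ :=
    ⟨by simpa [e, dist_eq_norm] using hT, by simpa [he_symm, dist_eq_norm] using hTinv⟩
  simpa [e, dist_eq_norm, midpoint_eq_smul_add] using
    he.dist_map_midpoint_le_iterate ⟨hφmono, hφhalf⟩ a b n

theorem midpoint_estimate_iterated
    {E F : Type*} [NormedAddCommGroup E] [NormedSpace ℝ E]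
    [NormedAddCommGroup F] [NormedSpace ℝ F]
    (φ : ℝ → ℝ) (hφmono : MonotoneOn φ (Set.Ici 0))
    (hφnonneg : ∀ t ≥ (0:ℝ), 0 ≤ φ t)
    (hφhalf : ∀ t ≥ (0:ℝ), φ t / 2 ≤ φ (t / 2))
    (T : E → F) (hbij : Function.Bijective T)
    (hT : ∀ x y : E, ‖T x - T y‖ ≤ φ ‖x - y‖)
    (hTinv : ∀ f g : F, ‖Function.invFun T f - Function.invFun T g‖ ≤ φ ‖f - g‖)
    (a b : E) (n : ℕ) :
    ‖T ((2:ℝ)⁻¹ • (a + b)) - (2:ℝ)⁻¹ • (T a + T b)‖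
      ≤ φ^[2 ^ (n + 1) - 1] (‖a - b‖ / 2 ^ (n + 1)) :=
  midpoint_estimate_iterated_general φ hφmono hφhalf T hbij hT hTinv a b n
end

section
/- Let ε : ℝ≥0 → ℝ>0 be a non-decreasing function and define φ(t) = t + ε(t). Then for every t ≥ 0 and every n ∈ ℕ, the integral ∫ from t to φ^n(t) of 1/ε(x) dx is at most n, where φ^n is the n-fold composition of φ. -/
/-!
On `[s, s + ε s]` the integrand `1 / ε` is at most `1 / ε s`, so each step of `φ` contributes at
most `1` to the integral; splitting `[t, φ^[n] t]` at the successive iterates gives the bound `n`.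
-/

open MeasureTheory Set

theorem le_iterate_of_forall_le_imp_le_self {α : Type*} [Preorder α] {φ : α → α} {t : α}
    (hφ : ∀ s, t ≤ s → s ≤ φ s) (n : ℕ) : t ≤ φ^[n] t := by
  induction n with
  | zero => exact le_rfl
  | succ n ih =>
    rw [Function.iterate_succ_apply']
    exact ih.trans (hφ _ ih)

theorem AntitoneOn.intervalIntegral_le_mul {f : ℝ → ℝ} {a b : ℝ} (hab : a ≤ b)
    (hf : AntitoneOn f (Icc a b)) : ∫ x in a..b, f x ≤ (b - a) * f a := by
  have hfa : ∀ x ∈ Icc a b, f x ≤ f a := fun x hx => hf ⟨le_rfl, hab⟩ hx hx.1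
  calc ∫ x in a..b, f x ≤ ∫ _ in a..b, f a :=
        intervalIntegral.integral_mono_on hab
          (by rw [← uIcc_of_le hab] at hf; exact hf.intervalIntegrable) intervalIntegrable_const hfa
    _ = (b - a) * f a := by rw [intervalIntegral.integral_const, smul_eq_mul]

theorem intervalIntegral_iterate_le {f φ : ℝ → ℝ} {t : ℝ} (hf : AntitoneOn f (Ici t))
    (hφ : ∀ s, t ≤ s → s ≤ φ s) (hstep : ∀ s, t ≤ s → ∫ x in s..φ s, f x ≤ 1) (n : ℕ) :
    ∫ x in t..φ^[n] t, f x ≤ n := by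
  have hint : ∀ a b, t ≤ a → t ≤ b → IntervalIntegrable f volume a b := fun a b ha hb =>
    (hf.mono fun x hx => (le_min ha hb).trans hx.1).intervalIntegrable
  induction n with
  | zero => simp
  | succ n ih =>
    have hs := le_iterate_of_forall_le_imp_le_self hφ n
    have hφs := hs.trans (hφ _ hs)
    rw [Function.iterate_succ_apply', ← intervalIntegral.integral_add_adjacent_intervals
      (hint _ _ le_rfl hs) (hint _ _ hs hφs)]
    push_cast
    linarith [hstep _ hs]

theorem integral_of_inv_eps_le_n
    (ε : ℝ → ℝ) (hεpos : ∀ t ≥ (0:ℝ), 0 < ε t)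
    (hεmono : MonotoneOn ε (Set.Ici 0))
    (φ : ℝ → ℝ) (hφ : ∀ t, φ t = t + ε t)
    (t : ℝ) (ht : 0 ≤ t) (n : ℕ) :
    ∫ x in t..(φ^[n] t), (ε x)⁻¹ ≤ (n : ℝ) := by
  have hanti : AntitoneOn (fun x => (ε x)⁻¹) (Ici 0) := fun x hx y hy hxy =>
    inv_anti₀ (hεpos x hx) (hεmono hx hy hxy)
  refine intervalIntegral_iterate_le (hanti.mono (Ici_subset_Ici.2 ht)) ?_ ?_ n
  · intro s hs
    rw [hφ]
    linarith [hεpos s (ht.trans hs)]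
  · intro s hs
    have hs0 : 0 ≤ s := ht.trans hs
    have hεs := hεpos s hs0
    calc ∫ x in s..φ s, (ε x)⁻¹ ≤ (φ s - s) * (ε s)⁻¹ :=
          AntitoneOn.intervalIntegral_le_mul (by rw [hφ]; linarith)
            (hanti.mono fun x hx => hs0.trans hx.1)
      _ = 1 := by rw [hφ, add_sub_cancel_left, mul_inv_cancel₀ hεs.ne']
end

section
/- Let T : E → F be a bijection between Banach spaces with T(0) = 0 such that ‖Tx−Ty‖ ≤ ‖x−y‖ + L and ‖T⁻¹f−T⁻¹g‖ ≤ ‖f−g‖ + L for all x,y ∈ E and f,g ∈ F, where L ≥ 0. Then there exist constants A, B ≥ 0 depending only on L such that ‖T((a+b)/2) − (Ta+Tb)/2‖ ≤ A·√‖a−b‖ + B for all a, b ∈ E. -/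
/-!
One can take `A = 0` and `B = 2 L`. Pulling a point `w` back by `T⁻¹`, comparing with the
midpoint `m` of `a, b` in `E` and pushing forward again shows that `T m` is a `2 L`-coarse
metric midpoint of `T a, T b`: `‖w - T m‖ ≤ (‖w - T a‖ + ‖w - T b‖) / 2 + 2 L` for all `w`.

In a normed space a `K`-coarse metric midpoint lies within `K` of the affine midpoint `q`.
With `c = T a - q` and `u = T m - q`, the norm along the ray `x ↦ c + x • u` is convex with
asymptotic slope `‖u‖`, so its excess over `x * ‖u‖` is antitone, bounded, hence convergent.
Testing the coarse-midpoint inequality at `w = q - 4 • (c + l • u)` and using convexity twice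
bounds `‖u‖` by `K + O(1 / l)` plus a second difference of that excess at scale `l`, which
tends to `0`.
-/

open Filter Topology Set

section CoarseMidpoint

variable {F : Type*} [NormedAddCommGroup F] [NormedSpace ℝ F]

def rayExcess (c u : F) (x : ℝ) : ℝ := ‖c + x • u‖ - x * ‖u‖

lemma convexOn_norm_add_smul (c u : F) : ConvexOn ℝ univ fun x : ℝ => ‖c + x • u‖ := by
  refine ⟨convex_univ, fun x _ y _ a b ha hb hab => ?_⟩
  calc ‖c + (a • x + b • y) • u‖ = ‖(a + b) • c + (a • x + b • y) • u‖ := by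
        rw [hab, one_smul]
    _ = ‖a • (c + x • u) + b • (c + y • u)‖ := by congr 1; module
    _ ≤ a • ‖c + x • u‖ + b • ‖c + y • u‖ := by
        refine (norm_add_le _ _).trans_eq ?_
        rw [norm_smul_of_nonneg ha, norm_smul_of_nonneg hb, smul_eq_mul, smul_eq_mul]

lemma antitone_rayExcess (c u : F) : Antitone (rayExcess c u) := by
  intro p r hpr
  have : ‖c + r • u‖ ≤ ‖c + p • u‖ + (r - p) * ‖u‖ :=
    calc ‖c + r • u‖ = ‖(c + p • u) + (r - p) • u‖ := by congr 1; module
      _ ≤ ‖c + p • u‖ + (r - p) * ‖u‖ := by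
        rw [← norm_smul_of_nonneg (sub_nonneg.2 hpr)]; exact norm_add_le _ _
  simp only [rayExcess]
  linarith

lemma neg_norm_le_rayExcess (c u : F) (x : ℝ) : -‖c‖ ≤ rayExcess c u x := by
  have h : ‖x • u‖ ≤ ‖c + x • u‖ + ‖c‖ := by
    simpa using norm_sub_le (c + x • u) c
  have hx : x * ‖u‖ ≤ ‖x • u‖ := by
    rw [norm_smul, Real.norm_eq_abs]
    exact mul_le_mul_of_nonneg_right (le_abs_self x) (norm_nonneg u)
  simp only [rayExcess]
  linarith

lemma exists_tendsto_rayExcess (c u : F) : ∃ g, Tendsto (rayExcess c u) atTop (𝓝 g) :=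
  ⟨_, tendsto_atTop_ciInf (antitone_rayExcess c u)
    ⟨-‖c‖, forall_mem_range.2 (neg_norm_le_rayExcess c u)⟩⟩

lemma norm_le_add_rayExcess_of_forall_norm_add_le {c u : F} {K : ℝ}
    (h : ∀ V, ‖V + u‖ ≤ (‖V + c‖ + ‖V - c‖) / 2 + K) {l : ℝ} (hl : 0 < l) :
    ‖u‖ ≤ 2 * ‖c‖ / l + (2 * rayExcess c u (2 * l / 3) + 2 * rayExcess c u (4 * l / 3)
      - 4 * rayExcess c u l) + K := by
  set Z : ℝ → ℝ := fun x => ‖c + x • u‖ with hZ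
  have hconv (x y a b : ℝ) (ha : 0 ≤ a) (hb : 0 ≤ b) (hab : a + b = 1) :
      Z (a * x + b * y) ≤ a * Z x + b * Z y :=
    (convexOn_norm_add_smul c u).2 (mem_univ x) (mem_univ y) ha hb hab
  have htest : 4 * Z (l + 1 / 4) ≤ (5 * Z (4 * l / 5) + 3 * Z (4 * l / 3)) / 2 + K := by
    have e1 : ‖(4 : ℝ) • (c + l • u) + u‖ = 4 * Z (l + 1 / 4) := by
      rw [← norm_smul_of_nonneg (by norm_num)]; congr 1; module
    have e2 : ‖(4 : ℝ) • (c + l • u) + c‖ = 5 * Z (4 * l / 5) := by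
      rw [← norm_smul_of_nonneg (by norm_num)]; congr 1; module
    have e3 : ‖(4 : ℝ) • (c + l • u) - c‖ = 3 * Z (4 * l / 3) := by
      rw [← norm_smul_of_nonneg (by norm_num)]; congr 1; module
    simpa only [e1, e2, e3] using h ((4 : ℝ) • (c + l • u))
  have hconv₁ : Z (4 * l / 5) ≤ 4 / 5 * Z (2 * l / 3) + 1 / 5 * Z (4 * l / 3) := by
    convert hconv (2 * l / 3) (4 * l / 3) (4 / 5) (1 / 5) (by norm_num) (by norm_num)
      (by norm_num) using 2
    ring
  have hconv₂ : Z l ≤ 1 / (4 * l + 1) * Z 0 + 4 * l / (4 * l + 1) * Z (l + 1 / 4) := by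
    convert hconv 0 (l + 1 / 4) (1 / (4 * l + 1)) (4 * l / (4 * l + 1)) (by positivity)
      (by positivity) (by field_simp; ring) using 2
    field_simp; ring
  have hZ0 : Z 0 = ‖c‖ := by simp [hZ]
  have hZl : l * ‖u‖ - ‖c‖ ≤ Z l := by
    have := neg_norm_le_rayExcess c u l
    simp only [rayExcess] at this
    linarith
  have hsec : (4 * l + 1) * Z l ≤ ‖c‖ + 4 * l * Z (l + 1 / 4) := by
    calc (4 * l + 1) * Z l
        ≤ (4 * l + 1) * (1 / (4 * l + 1) * Z 0 + 4 * l / (4 * l + 1) * Z (l + 1 / 4)) :=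
          mul_le_mul_of_nonneg_left hconv₂ (by positivity)
      _ = ‖c‖ + 4 * l * Z (l + 1 / 4) := by rw [hZ0]; field_simp
  have hmid : 4 * Z (l + 1 / 4) ≤ 2 * Z (2 * l / 3) + 2 * Z (4 * l / 3) + K := by
    linarith
  have key : l * ‖u‖ ≤ 2 * ‖c‖ + l * (2 * Z (2 * l / 3) + 2 * Z (4 * l / 3) - 4 * Z l + K) := by
    linarith [mul_le_mul_of_nonneg_left hmid hl.le]
  rw [← mul_le_mul_iff_right₀ hl]
  refine key.trans_eq ?_
  simp only [rayExcess, hZ]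
  field_simp
  ring

lemma norm_le_of_forall_norm_add_le {c u : F} {K : ℝ}
    (h : ∀ V, ‖V + u‖ ≤ (‖V + c‖ + ‖V - c‖) / 2 + K) : ‖u‖ ≤ K := by
  obtain ⟨g, hg⟩ := exists_tendsto_rayExcess c u
  have hscale (k : ℝ) (hk : 0 < k) : Tendsto (fun l : ℝ => k * l / 3) atTop atTop :=
    (tendsto_id.const_mul_atTop hk).atTop_div_const (by norm_num)
  have hlim : Tendsto (fun l : ℝ => 2 * ‖c‖ / l + (2 * rayExcess c u (2 * l / 3)
      + 2 * rayExcess c u (4 * l / 3) - 4 * rayExcess c u l) + K) atTop (𝓝 K) := by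
    have := ((tendsto_const_nhds (x := 2 * ‖c‖)).div_atTop tendsto_id).add
      ((((hg.comp (hscale 2 two_pos)).const_mul 2).add
        ((hg.comp (hscale 4 four_pos)).const_mul 2)).sub (hg.const_mul 4)) |>.add_const K
    convert this using 2
    · rfl
    · ring
  exact ge_of_tendsto hlim
    ((eventually_gt_atTop 0).mono fun l hl => norm_le_add_rayExcess_of_forall_norm_add_le h hl)

lemma norm_sub_midpoint_le_of_forall_norm_sub_le {x y z : F} {K : ℝ}
    (h : ∀ w, ‖w - z‖ ≤ (‖w - x‖ + ‖w - y‖) / 2 + K) :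
    ‖z - (2 : ℝ)⁻¹ • (x + y)‖ ≤ K := by
  set q := (2 : ℝ)⁻¹ • (x + y) with hq
  refine norm_le_of_forall_norm_add_le (c := x - q) fun V => ?_
  have e1 : q - V - z = -(V + (z - q)) := by abel
  have e2 : q - V - x = -(V + (x - q)) := by abel
  have e3 : q - V - y = -(V - (x - q)) := by rw [hq]; module
  simpa only [e1, e2, e3, norm_neg] using h (q - V)

end CoarseMidpoint

lemma norm_sub_midpoint_le_half_add {E : Type*} [NormedAddCommGroup E] [NormedSpace ℝ E]
    (a b z : E) : ‖z - (2 : ℝ)⁻¹ • (a + b)‖ ≤ (‖z - a‖ + ‖z - b‖) / 2 := by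
  have e : z - (2 : ℝ)⁻¹ • (a + b) = (2 : ℝ)⁻¹ • ((z - a) + (z - b)) := by module
  rw [e, norm_smul_of_nonneg (by norm_num)]
  linarith [norm_add_le (z - a) (z - b)]

lemma norm_sub_map_midpoint_le {E F : Type*} [NormedAddCommGroup E] [NormedSpace ℝ E]
    [NormedAddCommGroup F] {T : E → F} {S : F → E} (hTS : Function.RightInverse S T)
    (hST : Function.LeftInverse S T) {L : ℝ} (hT : ∀ x y, ‖T x - T y‖ ≤ ‖x - y‖ + L)
    (hS : ∀ f g, ‖S f - S g‖ ≤ ‖f - g‖ + L) (a b : E) (w : F) :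
    ‖w - T ((2 : ℝ)⁻¹ • (a + b))‖ ≤ (‖w - T a‖ + ‖w - T b‖) / 2 + 2 * L := by
  have hm := hT (S w) ((2 : ℝ)⁻¹ • (a + b))
  have ha := hS w (T a)
  have hb := hS w (T b)
  rw [hTS w] at hm
  rw [hST a] at ha
  rw [hST b] at hb
  linarith [norm_sub_midpoint_le_half_add a b (S w)]

theorem L_isometry_midpoint_sqrt_estimate
    (L : ℝ) (hL : 0 ≤ L) :
    ∃ A B : ℝ, 0 ≤ A ∧ 0 ≤ B ∧
      ∀ (E F : Type) (_ : NormedAddCommGroup E) (_ : NormedSpace ℝ E) (_ : CompleteSpace E)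
        (_ : NormedAddCommGroup F) (_ : NormedSpace ℝ F) (_ : CompleteSpace F)
        (T : E → F), Function.Bijective T → T 0 = 0 →
        (∀ x y : E, ‖T x - T y‖ ≤ ‖x - y‖ + L) →
        (∀ f g : F, ‖Function.invFun T f - Function.invFun T g‖ ≤ ‖f - g‖ + L) →
        ∀ a b : E,
          ‖T ((2:ℝ)⁻¹ • (a + b)) - (2:ℝ)⁻¹ • (T a + T b)‖ ≤ A * Real.sqrt ‖a - b‖ + B := by
  refine ⟨0, 2 * L, le_rfl, by positivity, ?_⟩
  intro E F _ _ _ _ _ _ T hbij _ hT hS a b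
  rw [zero_mul, zero_add]
  exact norm_sub_midpoint_le_of_forall_norm_sub_le fun w =>
    norm_sub_map_midpoint_le (Function.rightInverse_invFun hbij.2)
      (Function.leftInverse_invFun hbij.1) hT hS a b w
end

section
/- Let T : E → F be a bijective φ-isometry between Banach spaces for φ(t) = t + L, L ≥ 0. Then for all a, b ∈ E and n ∈ ℕ, ‖T((a+b)/2) − (Ta+Tb)/2‖ ≤ ‖a−b‖/2^(n+1) + 2^(n+1)·L. -/
/-!
This is a quantitative form of the reflection trick in Väisälä's proof of the Mazur–Ulam theorem.
Let `m` be the midpoint of `a, b` and `q` that of `T a, T b`, and let `σₘ`, `σ_q` be the point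
reflections in them. The permutation `R = σₘ ∘ T⁻¹ ∘ σ_q ∘ T` fixes `a` and `b` and distorts
distances by at most `2L`, as does its inverse. Since `dist (T m) (σ_q (T m)) = 2 dist (T m) q`,
the defect `δ(T) = dist (T m) q` satisfies `2 δ(T) ≤ dist m (R m) + L = δ(R) + L`. Iterating `n` times halves
the `dist a b` term at each step while the additive constant grows only linearly, which gives
`δ(T) ≤ dist a b / 2 ^ (n + 1) + (1 + n / 2) L`.
-/

open Equiv

/-- The paper's `φ`-bound `dist (f x) (f y) ≤ φ (dist x y)` for `φ t = t + L`. -/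
def LipschitzAddWith {α β : Type*} [PseudoMetricSpace α] [PseudoMetricSpace β]
    (L : ℝ) (f : α → β) : Prop :=
  ∀ x y, dist (f x) (f y) ≤ dist x y + L

namespace LipschitzAddWith

variable {α β γ : Type*} [PseudoMetricSpace α] [PseudoMetricSpace β] [PseudoMetricSpace γ]
  {L L' : ℝ} {f : α → β} {g : β → γ}

theorem comp (hg : LipschitzAddWith L g) (hf : LipschitzAddWith L' f) :
    LipschitzAddWith (L' + L) (g ∘ f) := fun x y =>
  (hg (f x) (f y)).trans (by linarith [hf x y])

theorem isometry_comp (hg : Isometry g) (hf : LipschitzAddWith L f) :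
    LipschitzAddWith L (g ∘ f) := fun x y => by
  simpa only [Function.comp_apply, hg.dist_eq] using hf x y

theorem comp_isometry (hg : LipschitzAddWith L g) (hf : Isometry f) :
    LipschitzAddWith L (g ∘ f) := fun x y => by
  simpa only [Function.comp_apply, hf.dist_eq] using hg (f x) (f y)

end LipschitzAddWith

noncomputable section Affine

variable {V W PE PF : Type*} [SeminormedAddCommGroup V] [NormedSpace ℝ V] [PseudoMetricSpace PE]
  [NormedAddTorsor V PE] [SeminormedAddCommGroup W] [NormedSpace ℝ W] [PseudoMetricSpace PF]
  [NormedAddTorsor W PF]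

theorem isometry_pointReflection (x : PE) : Isometry (pointReflection x) :=
  (AffineIsometryEquiv.pointReflection ℝ x).isometry

def midpointDefect (f : PE → PF) (a b : PE) : ℝ :=
  dist (f (midpoint ℝ a b)) (midpoint ℝ (f a) (f b))

def midpointReflection (T : PE ≃ PF) (a b : PE) : Perm PE :=
  T.trans <| (pointReflection (midpoint ℝ (T a) (T b))).trans <|
    T.symm.trans (pointReflection (midpoint ℝ a b))

@[simp]
theorem midpointReflection_apply_left (T : PE ≃ PF) (a b : PE) :
    midpointReflection T a b a = a := by
  simp [midpointReflection]

@[simp]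
theorem midpointReflection_apply_right (T : PE ≃ PF) (a b : PE) :
    midpointReflection T a b b = b := by
  simp [midpointReflection]

variable {L : ℝ} {T : PE ≃ PF}

theorem lipschitzAddWith_midpointReflection {L' : ℝ} (hT : LipschitzAddWith L T)
    (hT' : LipschitzAddWith L' T.symm) (a b : PE) :
    LipschitzAddWith (L + L') (midpointReflection T a b) :=
  ((LipschitzAddWith.isometry_comp (isometry_pointReflection _) hT').comp_isometry
    (isometry_pointReflection _)).comp hT

theorem lipschitzAddWith_midpointReflection_symm {L' : ℝ} (hT : LipschitzAddWith L T)
    (hT' : LipschitzAddWith L' T.symm) (a b : PE) :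
    LipschitzAddWith (L + L') (midpointReflection T a b).symm := by
  have := (hT'.comp_isometry (isometry_pointReflection (midpoint ℝ (T a) (T b)))).comp
    (hT.comp_isometry (isometry_pointReflection (midpoint ℝ a b)))
  simpa [midpointReflection, Function.comp_def] using this

theorem midpointDefect_le_dist_div_two_add {f : PE → PF} (hf : LipschitzAddWith L f)
    (a b : PE) : midpointDefect f a b ≤ dist a b / 2 + L := by
  set m := midpoint ℝ a b
  calc dist (f m) (midpoint ℝ (f a) (f b))
      = dist (midpoint ℝ (f m) (f m)) (midpoint ℝ (f a) (f b)) := by rw [midpoint_self]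
    _ ≤ (dist (f m) (f a) + dist (f m) (f b)) / 2 := by
      simpa using dist_midpoint_midpoint_le' (𝕜 := ℝ) (f m) (f m) (f a) (f b)
    _ ≤ (dist m a + L + (dist m b + L)) / 2 := by gcongr <;> apply hf
    _ = dist a b / 2 + L := by
      rw [dist_midpoint_left, dist_midpoint_right, Real.norm_two]
      ring

theorem two_mul_midpointDefect_le (hT : LipschitzAddWith L T) (a b : PE) :
    2 * midpointDefect T a b ≤ midpointDefect (midpointReflection T a b) a b + L := by
  set m := midpoint ℝ a b
  set y := pointReflection (midpoint ℝ (T a) (T b)) (T m)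
  calc 2 * dist (T m) (midpoint ℝ (T a) (T b)) = dist (T (T.symm y)) (T m) := by
        rw [apply_symm_apply, dist_pointReflection_right ℝ, Real.norm_two, dist_comm]
    _ ≤ dist (T.symm y) m + L := hT _ _
    _ = dist (midpointReflection T a b m) m + L := by
      rw [dist_comm]
      exact congrArg (· + L) (dist_pointReflection_left m _).symm
    _ = midpointDefect (midpointReflection T a b) a b + L := by
      rw [midpointDefect, midpointReflection_apply_left, midpointReflection_apply_right]

theorem midpointDefect_le_succ (hT : LipschitzAddWith L T) {a b : PE} {n : ℕ}
    (hR : midpointDefect (midpointReflection T a b) a b ≤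
      dist a b / 2 ^ (n + 1) + (1 + n / 2) * (L + L)) :
    midpointDefect T a b ≤ dist a b / 2 ^ (n + 1 + 1) + (1 + ↑(n + 1) / 2) * L := by
  have := two_mul_midpointDefect_le hT a b
  rw [pow_succ, ← div_div]
  push_cast
  linarith

-- The induction passes through the self-map `midpointReflection T a b`, hence runs over `Perm PE`.
theorem midpointDefect_le_of_perm {T : Perm PE} (hT : LipschitzAddWith L T)
    (hT' : LipschitzAddWith L T.symm) (a b : PE) (n : ℕ) :
    midpointDefect T a b ≤ dist a b / 2 ^ (n + 1) + (1 + n / 2) * L := by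
  induction n generalizing T L with
  | zero => simpa using midpointDefect_le_dist_div_two_add hT a b
  | succ n ih =>
    exact midpointDefect_le_succ hT <| ih (lipschitzAddWith_midpointReflection hT hT' a b)
      (lipschitzAddWith_midpointReflection_symm hT hT' a b)

theorem midpointDefect_le (hT : LipschitzAddWith L T) (hT' : LipschitzAddWith L T.symm)
    (a b : PE) (n : ℕ) :
    midpointDefect T a b ≤ dist a b / 2 ^ (n + 1) + (1 + n / 2) * L := by
  cases n with
  | zero => simpa using midpointDefect_le_dist_div_two_add hT a b
  | succ n =>
    exact midpointDefect_le_succ hT <| midpointDefect_le_of_perm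
      (lipschitzAddWith_midpointReflection hT hT' a b)
      (lipschitzAddWith_midpointReflection_symm hT hT' a b) a b n

end Affine

theorem midpointDefect_eq_norm {E F : Type*} [SeminormedAddCommGroup E] [NormedSpace ℝ E]
    [SeminormedAddCommGroup F] [NormedSpace ℝ F] (f : E → F) (a b : E) :
    midpointDefect f a b = ‖f ((2:ℝ)⁻¹ • (a + b)) - (2:ℝ)⁻¹ • (f a + f b)‖ := by
  simp only [midpointDefect, midpoint_eq_smul_add, invOf_eq_inv, dist_eq_norm]

theorem L_isometry_midpoint_dyadic_estimate_general
    {E F : Type*} [NormedAddCommGroup E] [NormedSpace ℝ E]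
    [NormedAddCommGroup F] [NormedSpace ℝ F]
    (L : ℝ) (hL : 0 ≤ L)
    (T : E → F) (hbij : Function.Bijective T)
    (hT : ∀ x y : E, ‖T x - T y‖ ≤ ‖x - y‖ + L)
    (hTinv : ∀ f g : F, ‖Function.invFun T f - Function.invFun T g‖ ≤ ‖f - g‖ + L)
    (a b : E) (n : ℕ) :
    ‖T ((2:ℝ)⁻¹ • (a + b)) - (2:ℝ)⁻¹ • (T a + T b)‖
      ≤ ‖a - b‖ / 2 ^ (n + 1) + 2 ^ (n + 1) * L := by
  let T' : E ≃ F :=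
    ⟨T, Function.invFun T, Function.leftInverse_invFun hbij.1, Function.rightInverse_invFun hbij.2⟩
  have hT' : LipschitzAddWith L T' := fun x y => by
    rw [dist_eq_norm, dist_eq_norm]; exact hT x y
  have hTinv' : LipschitzAddWith L T'.symm := fun x y => by
    rw [dist_eq_norm, dist_eq_norm]; exact hTinv x y
  have hdefect := midpointDefect_le hT' hTinv' a b n
  rw [midpointDefect_eq_norm, dist_eq_norm] at hdefect
  have hcoeff : 1 + (n : ℝ) / 2 ≤ 2 ^ (n + 1) := by
    have : (n : ℝ) < 2 ^ n := by exact_mod_cast Nat.lt_two_pow_self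
    have : (1 : ℝ) ≤ 2 ^ n := one_le_pow₀ one_le_two
    rw [pow_succ]
    linarith
  exact hdefect.trans (by gcongr)

theorem L_isometry_midpoint_dyadic_estimate
    {E F : Type*} [NormedAddCommGroup E] [NormedSpace ℝ E] [CompleteSpace E]
    [NormedAddCommGroup F] [NormedSpace ℝ F] [CompleteSpace F]
    (L : ℝ) (hL : 0 ≤ L)
    (T : E → F) (hbij : Function.Bijective T)
    (hT : ∀ x y : E, ‖T x - T y‖ ≤ ‖x - y‖ + L)
    (hTinv : ∀ f g : F, ‖Function.invFun T f - Function.invFun T g‖ ≤ ‖f - g‖ + L)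
    (a b : E) (n : ℕ) :
    ‖T ((2:ℝ)⁻¹ • (a + b)) - (2:ℝ)⁻¹ • (T a + T b)‖
      ≤ ‖a - b‖ / 2 ^ (n + 1) + 2 ^ (n + 1) * L :=
  L_isometry_midpoint_dyadic_estimate_general L hL T hbij hT hTinv a b n
end

section
/- Let E, F be Banach spaces and T : E → F a surjective map. Suppose ε_T(t) := sup{ |‖Tx−Ty‖ − ‖x−y‖| : ‖x−y‖ ≤ t or ‖Tx−Ty‖ ≤ t } is finite for every t ≥ 0, and suppose there exists δ₀ > 0 with ε_T(δ₀)/δ₀ < 1. Then there exists a bijection T̃ : E → F such that ‖Tx − T̃x‖ ≤ 2δ₀ + 2ε_T(δ₀) for all x ∈ E. -/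
/-!
Fibres of `T` have diameter at most `ε_T(δ₀)`, so `x ↦ (T (n • x))ₙ` is injective and `E` injects
into `ℕ → F`. For a Banach space `#(ℕ → F) ≤ #F`: if `W` is a maximal `1/2`-separated subset of the
unit ball, binary digit expansions `y = ∑ 2⁻ᵏ wₖ` inject the ball into `ℕ → W`, while the series
`∑ 8⁻ᵏ wₖ` inject `ℕ → W` into `F`. Moving `T x` to a nearby point of a `δ₀/2`-separated
`δ₀/2`-net and adding an injection of `E` into the ball of radius `δ₀/4` gives an injection
`E → F` that is `δ₀`-close to `T`. The Schröder–Bernstein construction applied to it and to a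
section of `T` produces a bijection that agrees pointwise with one of the two, hence stays
`δ₀`-close to `T`.
-/

open Metric Function
open scoped NNReal

lemma Metric.exists_isSeparated_isCover {X : Type*} [PseudoEMetricSpace X] (ε : ℝ≥0) (s : Set X) :
    ∃ N ⊆ s, IsSeparated ε N ∧ IsCover ε s N := by
  obtain ⟨N, hN⟩ := zorn_subset {N | N ⊆ s ∧ IsSeparated ε N} fun c hcS hc ↦
    ⟨⋃₀ c, ⟨Set.sUnion_subset fun N hN ↦ (hcS hN).1,
      (Set.pairwise_sUnion hc.directedOn).2 fun N hN ↦ (hcS hN).2⟩,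
      fun _ ↦ Set.subset_sUnion_of_mem⟩
  exact ⟨N, hN.prop.1, hN.prop.2, .of_maximal_isSeparated hN⟩

section PseudoMetricSpace

variable {X : Type*} [PseudoMetricSpace X] {ε : ℝ≥0} {s N : Set X} {x y : X}

lemma Metric.IsCover.exists_dist_le (hN : IsCover ε s N) (hx : x ∈ s) : ∃ y ∈ N, dist x y ≤ ε := by
  obtain ⟨y, hy, hxy⟩ := hN hx
  exact ⟨y, hy, edist_le_coe.1 hxy⟩

lemma Metric.IsSeparated.lt_dist (hN : IsSeparated ε N) (hx : x ∈ N) (hy : y ∈ N) (hxy : x ≠ y) :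
    ε < dist x y := by
  simpa only [edist_dist, ENNReal.coe_lt_ofReal] using hN hx hy hxy

end PseudoMetricSpace

lemma nonpos_of_forall_nat_mul_le {a b : ℝ} (h : ∀ n : ℕ, n * a ≤ b) : a ≤ 0 := by
  by_contra! ha
  obtain ⟨n, hn⟩ := exists_nat_gt (b / a)
  have := h n
  rw [div_lt_iff₀ ha] at hn
  linarith

section NormedSpace

variable {F : Type*} [NormedAddCommGroup F] [NormedSpace ℝ F]

lemma nonempty_embedding_closedBall {r : ℝ} (hr : 0 < r) : Nonempty (F ↪ closedBall (0 : F) r) :=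
  (Cardinal.le_def _ _).1 (cardinal_eq_of_mem_nhds ℝ (closedBall_mem_nhds 0 hr)).ge

lemma nonempty_embedding_closedBall_one_nat_arrow {W : Set F}
    (hW : IsCover (1 / 2) (closedBall (0 : F) 1) W) :
    Nonempty (closedBall (0 : F) 1 ↪ (ℕ → W)) := by
  choose c hcW hc using fun y : closedBall (0 : F) 1 ↦ hW.exists_dist_le y.2
  let φ (y : closedBall (0 : F) 1) : closedBall (0 : F) 1 :=
    ⟨(2 : ℝ) • ((y : F) - c y), by
      have := hc y
      rw [mem_closedBall_zero_iff, norm_smul, Real.norm_two, ← dist_eq_norm]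
      push_cast at this
      linarith⟩
  refine ⟨⟨fun y k ↦ ⟨c (φ^[k] y), hcW _⟩, fun y y' hyy' ↦ ?_⟩⟩
  have hdigit (k : ℕ) : c (φ^[k] y) = c (φ^[k] y') := congrArg Subtype.val (congrFun hyy' k)
  have hscale (k : ℕ) : (φ^[k] y : F) - φ^[k] y' = (2 : ℝ) ^ k • ((y : F) - y') := by
    induction k with
    | zero => simp
    | succ k ih =>
      simp only [iterate_succ_apply', φ, ← smul_sub, hdigit k, sub_sub_sub_cancel_right, ih,
        smul_smul, pow_succ']
  have hbound (k : ℕ) : (k : ℝ) * ‖(y : F) - y'‖ ≤ 2 := by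
    calc (k : ℝ) * ‖(y : F) - y'‖ ≤ 2 ^ k * ‖(y : F) - y'‖ := by
          gcongr; exact_mod_cast (Nat.lt_two_pow_self).le
      _ = ‖(φ^[k] y : F) - φ^[k] y'‖ := by
          rw [hscale, norm_smul, Real.norm_of_nonneg (by positivity)]
      _ ≤ ‖(φ^[k] y : F)‖ + ‖(φ^[k] y' : F)‖ := norm_sub_le _ _
      _ ≤ 2 := by
          linarith [mem_closedBall_zero_iff.1 (φ^[k] y).2, mem_closedBall_zero_iff.1 (φ^[k] y').2]
  exact Subtype.ext (sub_eq_zero.1 (norm_le_zero_iff.1 (nonpos_of_forall_nat_mul_le hbound)))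

section Geometric

variable {r C : ℝ} {d : ℕ → F}

lemma norm_tsum_geometric_smul_le (hr₀ : 0 ≤ r) (hr₁ : r < 1) (hd : ∀ j, ‖d j‖ ≤ C) :
    ‖∑' j, r ^ j • d j‖ ≤ C * (1 - r)⁻¹ :=
  tsum_of_norm_bounded ((hasSum_geometric_of_lt_one hr₀ hr₁).mul_left C) fun j ↦ by
    rw [norm_smul, Real.norm_of_nonneg (by positivity), mul_comm]
    exact mul_le_mul_of_nonneg_right (hd j) (by positivity)

variable [CompleteSpace F]

lemma summable_geometric_smul (hr₀ : 0 ≤ r) (hr₁ : r < 1) (hd : ∀ j, ‖d j‖ ≤ C) :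
    Summable fun j ↦ r ^ j • d j :=
  .of_norm_bounded ((summable_geometric_of_lt_one hr₀ hr₁).mul_left C) fun j ↦ by
    rw [norm_smul, Real.norm_of_nonneg (by positivity), mul_comm]
    exact mul_le_mul_of_nonneg_right (hd j) (by positivity)

/-- With ratio `1 / 8`, the leading term of size `> 1 / 2` outweighs the tail, of size
`≤ 2 / 7`. -/
lemma head_eq_zero_and_tsum_tail_eq_zero (hd : ∀ j, ‖d j‖ ≤ 2) (hgap : ∀ j, d j = 0 ∨ 1 / 2 < ‖d j‖)
    (hsum : ∑' j, (1 / 8 : ℝ) ^ j • d j = 0) :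
    d 0 = 0 ∧ ∑' j, (1 / 8 : ℝ) ^ j • d (j + 1) = 0 := by
  set tail := ∑' j, (1 / 8 : ℝ) ^ j • d (j + 1)
  have hsplit : ∑' j, (1 / 8 : ℝ) ^ j • d j = d 0 + (1 / 8 : ℝ) • tail := by
    rw [(summable_geometric_smul (by norm_num) (by norm_num) hd).tsum_eq_zero_add,
      ← tsum_const_smul'']
    simp only [pow_zero, one_smul, pow_succ', mul_smul]
  have htail : ‖tail‖ ≤ 2 * (1 - 1 / 8)⁻¹ :=
    norm_tsum_geometric_smul_le (by norm_num) (by norm_num) fun j ↦ hd (j + 1)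
  have hd₀ : d 0 = -((1 / 8 : ℝ) • tail) := eq_neg_of_add_eq_zero_left (hsplit ▸ hsum)
  have hd₀_zero : d 0 = 0 := (hgap 0).resolve_right fun h ↦ by
    rw [hd₀, norm_neg, norm_smul, Real.norm_of_nonneg (by norm_num)] at h
    linarith
  refine ⟨hd₀_zero, ?_⟩
  rw [hd₀_zero, zero_add] at hsplit
  exact (smul_eq_zero.1 (hsplit ▸ hsum)).resolve_left (by norm_num)

lemma eq_zero_of_tsum_geometric_smul_eq_zero (hd : ∀ j, ‖d j‖ ≤ 2)
    (hgap : ∀ j, d j = 0 ∨ 1 / 2 < ‖d j‖) (hsum : ∑' j, (1 / 8 : ℝ) ^ j • d j = 0) : d = 0 := by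
  funext n
  induction n generalizing d with
  | zero => exact (head_eq_zero_and_tsum_tail_eq_zero hd hgap hsum).1
  | succ n ih =>
    exact ih (fun j ↦ hd (j + 1)) (fun j ↦ hgap (j + 1))
      (head_eq_zero_and_tsum_tail_eq_zero hd hgap hsum).2

end Geometric

lemma injective_tsum_geometric_smul [CompleteSpace F] {W : Set F} (hW : W ⊆ closedBall 0 1)
    (hWsep : IsSeparated (1 / 2 : ℝ≥0) W) :
    Injective fun f : ℕ → W ↦ ∑' k, (1 / 8 : ℝ) ^ k • (f k : F) := by
  intro f g hfg
  have hnorm (f : ℕ → W) (k : ℕ) : ‖(f k : F)‖ ≤ 1 := mem_closedBall_zero_iff.1 (hW (f k).2)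
  have hd (k : ℕ) : ‖(f k : F) - g k‖ ≤ 2 := by
    linarith [norm_sub_le (f k : F) (g k), hnorm f k, hnorm g k]
  have hgap (k : ℕ) : (f k : F) - g k = 0 ∨ 1 / 2 < ‖(f k : F) - g k‖ := by
    by_cases hfgk : (f k : F) = g k
    · exact .inl (sub_eq_zero.2 hfgk)
    · right
      simpa [← dist_eq_norm] using hWsep.lt_dist (f k).2 (g k).2 hfgk
  have hsum : ∑' k, (1 / 8 : ℝ) ^ k • ((f k : F) - g k) = 0 := by
    simp only [smul_sub]
    rw [Summable.tsum_sub (summable_geometric_smul (by norm_num) (by norm_num) (hnorm f))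
      (summable_geometric_smul (by norm_num) (by norm_num) (hnorm g))]
    exact sub_eq_zero.2 hfg
  have hfg_eq := eq_zero_of_tsum_geometric_smul_eq_zero hd hgap hsum
  funext k
  exact Subtype.ext (sub_eq_zero.1 (congrFun hfg_eq k))

lemma nonempty_embedding_nat_arrow [CompleteSpace F] : Nonempty ((ℕ → F) ↪ F) := by
  obtain ⟨W, hWB, hWsep, hWcov⟩ := exists_isSeparated_isCover (1 / 2) (closedBall (0 : F) 1)
  obtain ⟨e₁⟩ := nonempty_embedding_closedBall (F := F) one_pos
  obtain ⟨e₂⟩ := nonempty_embedding_closedBall_one_nat_arrow hWcov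
  let pair : (ℕ → ℕ → W) ≃ (ℕ → W) :=
    (Equiv.curry ℕ ℕ W).symm.trans (Equiv.arrowCongr Nat.pairEquiv (Equiv.refl W))
  exact ⟨(e₁.trans e₂).arrowCongrRight.trans <|
    pair.toEmbedding.trans ⟨_, injective_tsum_geometric_smul hWB hWsep⟩⟩

end NormedSpace

lemma injective_nsmul_comp_of_norm_sub_le {E β : Type*} [NormedAddCommGroup E] [NormedSpace ℝ E]
    {T : E → β} {C : ℝ} (hT : ∀ x y, T x = T y → ‖x - y‖ ≤ C) :
    Injective fun x (n : ℕ) ↦ T (n • x) := by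
  intro x y hxy
  have hbound (n : ℕ) : (n : ℝ) * ‖x - y‖ ≤ C := by
    simpa only [← smul_sub, RCLike.norm_nsmul ℝ, nsmul_eq_mul] using hT _ _ (congrFun hxy n)
  exact sub_eq_zero.1 (norm_le_zero_iff.1 (nonpos_of_forall_nat_mul_le hbound))

lemma exists_injective_norm_sub_le {α F : Type*} [NormedAddCommGroup F] [NormedSpace ℝ F]
    (g : α → F) (e : α ↪ F) {r : ℝ} (hr : 0 < r) :
    ∃ h : α → F, Injective h ∧ ∀ a, ‖g a - h a‖ ≤ r := by
  obtain ⟨N, -, hNsep, hNcov⟩ := exists_isSeparated_isCover (r / 2).toNNReal (Set.univ : Set F)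
  have hr₂ : (((r / 2).toNNReal : ℝ)) = r / 2 := Real.coe_toNNReal _ (by positivity)
  choose c hcN hc using fun y : F ↦ hNcov.exists_dist_le (Set.mem_univ y)
  obtain ⟨ι⟩ := nonempty_embedding_closedBall (F := F) (by positivity : 0 < r / 4)
  have hι (a : α) : ‖(ι (e a) : F)‖ ≤ r / 4 := mem_closedBall_zero_iff.1 (ι (e a)).2
  refine ⟨fun a ↦ c (g a) + ι (e a), fun a b hab ↦ ?_, fun a ↦ ?_⟩
  · have hc_eq : c (g a) = c (g b) := by
      by_contra hne
      have hsep := hNsep.lt_dist (hcN _) (hcN _) hne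
      rw [hr₂, dist_eq_norm, sub_eq_sub_iff_add_eq_add.2 (hab.trans (add_comm _ _))] at hsep
      linarith [norm_sub_le (ι (e b) : F) (ι (e a)), hι a, hι b]
    simp only [hc_eq, add_right_inj] at hab
    exact e.injective (ι.injective (Subtype.ext hab))
  · have := hc (g a)
    rw [hr₂, dist_eq_norm] at this
    calc ‖g a - (c (g a) + ι (e a))‖ = ‖(g a - c (g a)) - ι (e a)‖ := by rw [sub_add_eq_sub_sub]
      _ ≤ ‖g a - c (g a)‖ + ‖(ι (e a) : F)‖ := norm_sub_le _ _
      _ ≤ r := by linarith [hι a]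

theorem surjection_close_to_bijection_general
    {E F : Type*} [NormedAddCommGroup E] [NormedSpace ℝ E]
    [NormedAddCommGroup F] [NormedSpace ℝ F] [CompleteSpace F]
    (T : E → F) (hsurj : Function.Surjective T)
    (eT : ℝ → ℝ)
    (heT : ∀ t, eT t = sSup {r : ℝ | ∃ x y : E,
      r = |‖T x - T y‖ - ‖x - y‖| ∧ (‖x - y‖ ≤ t ∨ ‖T x - T y‖ ≤ t)})
    (hbdd : ∀ t ≥ (0:ℝ), BddAbove {r : ℝ | ∃ x y : E,
      r = |‖T x - T y‖ - ‖x - y‖| ∧ (‖x - y‖ ≤ t ∨ ‖T x - T y‖ ≤ t)})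
    (δ₀ : ℝ) (hδ₀ : 0 < δ₀) :
    ∃ T' : E → F, Function.Bijective T' ∧ ∀ x : E, ‖T x - T' x‖ ≤ 2 * δ₀ + 2 * eT δ₀ := by
  have hfiber (x y : E) (hxy : T x = T y) : ‖x - y‖ ≤ eT δ₀ := by
    rw [heT]
    refine le_csSup (hbdd δ₀ hδ₀.le) ⟨x, y, ?_, .inr ?_⟩ <;> simp [hxy, hδ₀.le]
  have heT_nonneg : 0 ≤ eT δ₀ := by simpa using hfiber 0 0 rfl
  obtain ⟨ι⟩ := nonempty_embedding_nat_arrow (F := F)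
  obtain ⟨h, hinj, hclose⟩ :=
    exists_injective_norm_sub_le T
      ((Embedding.mk _ (injective_nsmul_comp_of_norm_sub_le hfiber)).trans ι) hδ₀
  obtain ⟨T', hbij, hT'⟩ := Embedding.schroeder_bernstein_of_rel hinj (injective_surjInv hsurj)
    (fun x y ↦ ‖T x - y‖ ≤ δ₀) hclose fun y ↦ by simp [surjInv_eq hsurj, hδ₀.le]
  exact ⟨T', hbij, fun x ↦ (hT' x).trans (by linarith)⟩

theorem surjection_close_to_bijection
    {E F : Type*} [NormedAddCommGroup E] [NormedSpace ℝ E] [CompleteSpace E]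
    [NormedAddCommGroup F] [NormedSpace ℝ F] [CompleteSpace F]
    (T : E → F) (hsurj : Function.Surjective T)
    (eT : ℝ → ℝ)
    (heT : ∀ t, eT t = sSup {r : ℝ | ∃ x y : E,
      r = |‖T x - T y‖ - ‖x - y‖| ∧ (‖x - y‖ ≤ t ∨ ‖T x - T y‖ ≤ t)})
    (hbdd : ∀ t ≥ (0:ℝ), BddAbove {r : ℝ | ∃ x y : E,
      r = |‖T x - T y‖ - ‖x - y‖| ∧ (‖x - y‖ ≤ t ∨ ‖T x - T y‖ ≤ t)})
    (δ₀ : ℝ) (hδ₀ : 0 < δ₀) (hratio : eT δ₀ / δ₀ < 1) :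
    ∃ T' : E → F, Function.Bijective T' ∧ ∀ x : E, ‖T x - T' x‖ ≤ 2 * δ₀ + 2 * eT δ₀ :=
  surjection_close_to_bijection_general T hsurj eT heT hbdd δ₀ hδ₀
end

section
/- Let T : E → F be a bijective φ-isometry between Banach spaces with φ(t) = t + t^α for some α ∈ [0,1). Then ‖T((a+b)/2) − (Ta+Tb)/2‖ = O(‖a−b‖^(1/(2−α))) as ‖a−b‖ → ∞; that is, there exist constants C, R > 0 such that for all a,b with ‖a−b‖ ≥ R, ‖T((a+b)/2) − (Ta+Tb)/2‖ ≤ C·‖a−b‖^(1/(2−α)). -/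
/-!
Let `m` be the midpoint of `a, b`, and let `σ`, `σ'` be the point reflections in `m` and in the
midpoint of `T a, T b`. The map `u = σ ∘ T⁻¹ ∘ σ' ∘ T` fixes `a` and `b`, and at the scale
`d = ‖a - b‖` both `u` and `u⁻¹` are non-expanding up to an additive error `ε ≈ d ^ α`; moreover
`2 ‖T m - (T a + T b) / 2‖` is at most the displacement of `m` under `u`, plus `ε`.
Passing from `u` to `σ ∘ u⁻¹ ∘ σ ∘ u` doubles the displacement of `m` (up to the current error)
and doubles the error, while a displacement can never exceed `d` plus the error because `a` stays
fixed. After `K ≈ log₂ (d / ε)` steps this bounds the original displacement by `O(K ε)`, i.e.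
`O(d ^ α log d)`, which is `O(d ^ (1 / (2 - α)))` since `α < 1 / (2 - α)`.
-/

open Function Real
open Equiv (pointReflection)

section AlmostNonexpanding

variable {X Y Z : Type*} [PseudoMetricSpace X] [PseudoMetricSpace Y] [PseudoMetricSpace Z]
  {ε ε' D : ℝ}

/-- The scale condition bounds `dist x y + ε` rather than `dist x y`, so that composition adds
the errors without shrinking the scale. -/
def AlmostNonexpanding (ε D : ℝ) (f : X → Y) : Prop :=
  ∀ x y, dist x y + ε ≤ D → dist (f x) (f y) ≤ dist x y + ε

namespace AlmostNonexpanding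

theorem comp {f : Y → Z} {g : X → Y} (hf : AlmostNonexpanding ε D f)
    (hg : AlmostNonexpanding ε' D g) (hε : 0 ≤ ε) : AlmostNonexpanding (ε + ε') D (f ∘ g) := by
  intro x y hxy
  have hgxy := hg x y (by linarith)
  have hfgxy := hf (g x) (g y) (by linarith)
  simp only [comp_apply]
  linarith

theorem comp_isometry {f : Y → Z} {σ : X → Y} (hf : AlmostNonexpanding ε D f)
    (hσ : Isometry σ) : AlmostNonexpanding ε D (f ∘ σ) := fun x y hxy => by
  simpa only [comp_apply, hσ.dist_eq] using hf (σ x) (σ y) (by rwa [hσ.dist_eq])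

theorem isometry_comp {f : X → Y} {σ : Y → Z} (hσ : Isometry σ)
    (hf : AlmostNonexpanding ε D f) : AlmostNonexpanding ε D (σ ∘ f) := fun x y hxy => by
  simpa only [comp_apply, hσ.dist_eq] using hf x y hxy

end AlmostNonexpanding

theorem almostNonexpanding_rpow {f : X → Y} {α : ℝ} (hα : 0 ≤ α) (hD : 0 ≤ D)
    (hf : ∀ x y, dist (f x) (f y) ≤ dist x y + dist x y ^ α) :
    AlmostNonexpanding (D ^ α) D f := fun x y hxy => by
  have hxyD : dist x y ^ α ≤ D ^ α :=
    rpow_le_rpow dist_nonneg (by linarith [rpow_nonneg hD α]) hα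
  linarith [hf x y]

end AlmostNonexpanding

section ReflectionConjugate

variable {E F : Type*} [AddCommGroup E] [AddCommGroup F]

def reflConj (m : E) (m' : F) (T : E ≃ F) : Equiv.Perm E :=
  T.trans ((pointReflection m').trans (T.symm.trans (pointReflection m)))

@[simp]
theorem reflConj_apply (m : E) (m' : F) (T : E ≃ F) (x : E) :
    reflConj m m' T x = pointReflection m (T.symm (pointReflection m' (T x))) :=
  rfl

theorem reflConj_symm_apply (m : E) (m' : F) (T : E ≃ F) (x : E) :
    (reflConj m m' T).symm x = T.symm (pointReflection m' (T (pointReflection m x))) := by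
  simp [reflConj]

variable [Module ℝ E] [Module ℝ F]

theorem reflConj_apply_left {T : E ≃ F} {a b : E} {a' b' : F} (ha : T a = a') (hb : T b = b') :
    reflConj (midpoint ℝ a b) (midpoint ℝ a' b') T a = a := by
  simp [ha, ← hb]

theorem reflConj_apply_right {T : E ≃ F} {a b : E} {a' b' : F} (ha : T a = a') (hb : T b = b') :
    reflConj (midpoint ℝ a b) (midpoint ℝ a' b') T b = b := by
  simp [hb, ← ha]

end ReflectionConjugate

section NormedReflection

variable {E F : Type*} [NormedAddCommGroup E] [NormedSpace ℝ E]
  [NormedAddCommGroup F] [NormedSpace ℝ F] {ε D : ℝ}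

theorem isometry_pointReflection_s14 (m : E) : Isometry (pointReflection m) :=
  (AffineIsometryEquiv.pointReflection ℝ m).isometry

theorem dist_pointReflection_self_real (m x : E) :
    dist (pointReflection m x) x = 2 * dist m x := by
  rw [dist_pointReflection_right ℝ, Real.norm_two]

theorem almostNonexpanding_reflConj {T : E ≃ F} (hT : AlmostNonexpanding ε D T)
    (hT' : AlmostNonexpanding ε D T.symm) (hε : 0 ≤ ε) (m : E) (m' : F) :
    AlmostNonexpanding (2 * ε) D (reflConj m m' T) ∧
      AlmostNonexpanding (2 * ε) D (reflConj m m' T).symm := by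
  have hsymm : ⇑(reflConj m m' T).symm =
      (T.symm ∘ pointReflection m') ∘ (T ∘ pointReflection m) :=
    funext (reflConj_symm_apply m m' T)
  have hfun : ⇑(reflConj m m' T) = pointReflection m ∘ ((T.symm ∘ pointReflection m') ∘ T) := rfl
  rw [two_mul, hfun, hsymm]
  exact ⟨.isometry_comp (isometry_pointReflection_s14 m)
      ((hT'.comp_isometry (isometry_pointReflection_s14 m')).comp hT hε),
    (hT'.comp_isometry (isometry_pointReflection_s14 m')).comp
      (hT.comp_isometry (isometry_pointReflection_s14 m)) hε⟩

theorem AlmostNonexpanding.dist_apply_midpoint_le {u : E → E} {a b : E}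
    (hu : AlmostNonexpanding ε D u) (ha : u a = a) (h : dist a b / 2 + ε ≤ D) :
    dist (u (midpoint ℝ a b)) (midpoint ℝ a b) ≤ dist a b + ε := by
  have hma : dist (midpoint ℝ a b) a = dist a b / 2 := by
    rw [dist_comm, dist_left_midpoint (𝕜 := ℝ), Real.norm_two]
    ring
  calc dist (u (midpoint ℝ a b)) (midpoint ℝ a b)
      ≤ dist (u (midpoint ℝ a b)) (u a) + dist a (midpoint ℝ a b) := by
        rw [ha]
        exact dist_triangle _ _ _
    _ ≤ dist a b + ε := by
        linarith [hu _ a (by rwa [hma]), dist_comm a (midpoint ℝ a b)]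

theorem two_mul_dist_le_dist_reflConj {T : E ≃ F} (hT : AlmostNonexpanding ε D T)
    (m : E) (m' : F) (h : dist (reflConj m m' T m) m + ε ≤ D) :
    2 * dist (T m) m' ≤ dist (reflConj m m' T m) m + ε := by
  set z := T.symm (pointReflection m' (T m))
  have hz : dist (reflConj m m' T m) m = dist z m := by
    rw [reflConj_apply, ← (isometry_pointReflection_s14 m).dist_eq z m, Equiv.pointReflection_self]
  have hTz : T z = pointReflection m' (T m) := T.apply_symm_apply _
  rw [hz] at h ⊢
  calc 2 * dist (T m) m' = dist (T z) (T m) := by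
        rw [hTz, dist_pointReflection_self_real, dist_comm]
    _ ≤ dist z m + ε := hT z m h

end NormedReflection

theorem le_div_two_pow_add_of_two_mul_le {x : ℕ → ℝ} {ε : ℝ} {n : ℕ}
    (h : ∀ k < n, 2 * x k ≤ x (k + 1) + 2 ^ k * ε) : x 0 ≤ x n / 2 ^ n + n * ε / 2 := by
  induction n with
  | zero => simp
  | succ n ih =>
    have hx0 := ih fun k hk => h k (by omega)
    have hxn : x n / 2 ^ n ≤ x (n + 1) / 2 ^ (n + 1) + ε / 2 :=
      calc x n / 2 ^ n = 2 * x n / 2 ^ (n + 1) := by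
            rw [pow_succ]
            field_simp
        _ ≤ (x (n + 1) + 2 ^ n * ε) / 2 ^ (n + 1) := by
            gcongr
            exact h n (by omega)
        _ = x (n + 1) / 2 ^ (n + 1) + ε / 2 := by
            rw [pow_succ]
            field_simp
    push_cast
    linarith

theorem rpow_mul_le_mul_rpow {c d α : ℝ} (hc : 1 ≤ c) (hd : 0 ≤ d) (hα : α ≤ 1) :
    (c * d) ^ α ≤ c * d ^ α := by
  rw [mul_rpow (by linarith) hd]
  gcongr
  calc c ^ α ≤ c ^ (1 : ℝ) := rpow_le_rpow_of_exponent_le hc hα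
    _ = c := rpow_one c

theorem mul_rpow_le_self {c d α : ℝ} (hc : 0 < c) (hα : α < 1) (hd : c ^ (1 - α)⁻¹ ≤ d) :
    c * d ^ α ≤ d := by
  have hd0 : 0 < d := (rpow_pos_of_pos hc _).trans_le hd
  have hc_le : c ≤ d ^ (1 - α) := by
    calc c = (c ^ (1 - α)⁻¹) ^ (1 - α) := by
          rw [← rpow_mul hc.le, inv_mul_cancel₀ (by linarith), rpow_one]
      _ ≤ d ^ (1 - α) := by gcongr
  calc c * d ^ α ≤ d ^ (1 - α) * d ^ α := by gcongr
    _ = d := by rw [← rpow_add hd0, sub_add_cancel, rpow_one]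

theorem add_logb_mul_rpow_le {α β c d : ℝ} (hαβ : α < β) (hc : 0 ≤ c) (hd : 1 ≤ d) :
    (c + logb 2 d) * d ^ α ≤ (c + 1 / ((β - α) * log 2)) * d ^ β := by
  have hd0 : 0 < d := by linarith
  have hδ : 0 < β - α := sub_pos.2 hαβ
  have hlog2 : 0 < log 2 := log_pos one_lt_two
  have hlogb : logb 2 d ≤ d ^ (β - α) / ((β - α) * log 2) := by
    calc logb 2 d = log d / log 2 := rfl
      _ ≤ d ^ (β - α) / (β - α) / log 2 := by gcongr; exact log_le_rpow_div hd0.le hδ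
      _ = d ^ (β - α) / ((β - α) * log 2) := div_div _ _ _
  have hpow : d ^ α ≤ d ^ β := rpow_le_rpow_of_exponent_le hd hαβ.le
  calc (c + logb 2 d) * d ^ α = c * d ^ α + logb 2 d * d ^ α := by ring
    _ ≤ c * d ^ β + d ^ (β - α) / ((β - α) * log 2) * d ^ α := by gcongr
    _ = (c + 1 / ((β - α) * log 2)) * d ^ β := by
        rw [div_mul_eq_mul_div, ← rpow_add hd0, sub_add_cancel]; ring

section Midpoint

variable {E F : Type*} [NormedAddCommGroup E] [NormedSpace ℝ E]
  [NormedAddCommGroup F] [NormedSpace ℝ F] {ε : ℝ}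

/-- The scale `3 * dist a b` leaves room for the displacements `≤ dist a b + 2 ^ k * ε` of the
midpoint met along the iteration `u ↦ reflConj m m u`. -/
theorem dist_apply_midpoint_le_of_iterate_reflConj {u : Equiv.Perm E} {a b : E} {K : ℕ}
    (ha : u a = a) (hb : u b = b) (hu : AlmostNonexpanding ε (3 * dist a b) u)
    (hu' : AlmostNonexpanding ε (3 * dist a b) u.symm) (hε : 0 ≤ ε)
    (hK : 2 ^ K * ε ≤ dist a b) :
    dist (u (midpoint ℝ a b)) (midpoint ℝ a b) ≤ dist a b / 2 ^ K + ε + K * ε / 2 := by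
  set m := midpoint ℝ a b
  set d := dist a b
  set v : ℕ → Equiv.Perm E := fun k => (reflConj m m)^[k] u
  have hv_succ (k : ℕ) : v (k + 1) = reflConj m m (v k) := iterate_succ_apply' _ _ _
  have hfix (k : ℕ) : v k a = a ∧ v k b = b := by
    induction k with
    | zero => exact ⟨ha, hb⟩
    | succ k ih =>
      rw [hv_succ]
      exact ⟨reflConj_apply_left ih.1 ih.2, reflConj_apply_right ih.1 ih.2⟩
  have hnonexp (k : ℕ) : AlmostNonexpanding (2 ^ k * ε) (3 * d) (v k) ∧
      AlmostNonexpanding (2 ^ k * ε) (3 * d) (v k).symm := by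
    induction k with
    | zero => simpa using ⟨hu, hu'⟩
    | succ k ih =>
      rw [hv_succ, pow_succ', mul_assoc]
      exact almostNonexpanding_reflConj ih.1 ih.2 (by positivity) m m
  have herr {k : ℕ} (hk : k ≤ K) : 2 ^ k * ε ≤ d :=
    (mul_le_mul_of_nonneg_right (pow_le_pow_right₀ one_le_two hk) hε).trans hK
  have hcap {k : ℕ} (hk : k ≤ K) : dist (v k m) m ≤ d + 2 ^ k * ε :=
    (hnonexp k).1.dist_apply_midpoint_le (hfix k).1
      (show d / 2 + _ ≤ _ by linarith [herr hk, show 0 ≤ 2 ^ k * ε by positivity])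
  have hstep : ∀ k < K, 2 * dist (v k m) m ≤ dist (v (k + 1) m) m + 2 ^ k * ε := by
    intro k hk
    have hcap' := hcap (Nat.succ_le_of_lt hk)
    have herr' := herr (Nat.succ_le_of_lt hk)
    have hdouble : (2 : ℝ) ^ (k + 1) * ε = 2 * (2 ^ k * ε) := by ring
    rw [hdouble] at hcap' herr'
    rw [hv_succ] at hcap' ⊢
    exact two_mul_dist_le_dist_reflConj (hnonexp k).1 m m
      (by linarith [show 0 ≤ 2 ^ k * ε by positivity])
  calc dist (u m) m ≤ dist (v K m) m / 2 ^ K + K * ε / 2 :=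
        le_div_two_pow_add_of_two_mul_le hstep
    _ ≤ (d + 2 ^ K * ε) / 2 ^ K + K * ε / 2 := by gcongr; exact hcap le_rfl
    _ = d / 2 ^ K + ε + K * ε / 2 := by field_simp

theorem two_mul_dist_map_midpoint_le_of_almostNonexpanding {T : E ≃ F} {a b : E}
    (hT : AlmostNonexpanding ε (3 * dist a b) T)
    (hT' : AlmostNonexpanding ε (3 * dist a b) T.symm) (hε : 1 ≤ 2 * ε)
    (hεd : 2 * ε ≤ dist a b) :
    2 * dist (T (midpoint ℝ a b)) (midpoint ℝ (T a) (T b)) ≤ (7 + logb 2 (dist a b)) * ε := by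
  set m := midpoint ℝ a b
  set d := dist a b
  set u := reflConj m (midpoint ℝ (T a) (T b)) T
  obtain ⟨hu, hu'⟩ := almostNonexpanding_reflConj hT hT' (by linarith) m (midpoint ℝ (T a) (T b))
  have hua : u a = a := reflConj_apply_left rfl rfl
  have hub : u b = b := reflConj_apply_right rfl rfl
  obtain ⟨K, hK, hK'⟩ := exists_nat_pow_near ((one_le_div₀ (by linarith)).2 hεd) one_lt_two
  have h2K : 2 ^ K * (2 * ε) ≤ d := (le_div_iff₀ (by linarith)).1 hK
  have hdK : d / 2 ^ K ≤ 4 * ε := by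
    have := (div_lt_iff₀ (by linarith)).1 hK'
    rw [div_le_iff₀ (by positivity)]
    rw [pow_succ] at this
    linarith
  have hKlog : (K : ℝ) ≤ logb 2 d := by
    rw [le_logb_iff_rpow_le one_lt_two (by linarith), rpow_natCast]
    exact hK.trans (div_le_self (by linarith) hε)
  have hdisp := dist_apply_midpoint_le_of_iterate_reflConj hua hub hu hu' (by linarith) h2K
  have hcap := hu.dist_apply_midpoint_le hua (show d / 2 + _ ≤ _ by linarith)
  have hKε := mul_le_mul_of_nonneg_right hKlog (show 0 ≤ ε by linarith)
  calc 2 * dist (T m) (midpoint ℝ (T a) (T b)) ≤ dist (u m) m + ε :=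
        two_mul_dist_le_dist_reflConj hT _ _ (show _ ≤ 3 * d by linarith)
    _ ≤ (7 + logb 2 d) * ε := by linarith

theorem two_mul_dist_map_midpoint_le {T : E ≃ F} {α : ℝ} (hα0 : 0 ≤ α) (hα1 : α < 1)
    (hT : ∀ x y, dist (T x) (T y) ≤ dist x y + dist x y ^ α)
    (hT' : ∀ x y, dist (T.symm x) (T.symm y) ≤ dist x y + dist x y ^ α)
    {a b : E} (hab : 6 ^ (1 - α)⁻¹ ≤ dist a b) :
    2 * dist (T (midpoint ℝ a b)) (midpoint ℝ (T a) (T b)) ≤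
      3 * (7 + logb 2 (dist a b)) * dist a b ^ α := by
  have hd : 1 ≤ dist a b := (one_le_rpow (by norm_num) (inv_nonneg.2 (by linarith))).trans hab
  have h3d : (3 * dist a b) ^ α ≤ 3 * dist a b ^ α :=
    rpow_mul_le_mul_rpow (by norm_num) (by linarith) hα1.le
  calc 2 * dist (T (midpoint ℝ a b)) (midpoint ℝ (T a) (T b))
      ≤ (7 + logb 2 (dist a b)) * (3 * dist a b) ^ α :=
        two_mul_dist_map_midpoint_le_of_almostNonexpanding
          (almostNonexpanding_rpow hα0 (by positivity) hT)
          (almostNonexpanding_rpow hα0 (by positivity) hT')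
          (by linarith [one_le_rpow (show 1 ≤ 3 * dist a b by linarith) hα0])
          (by linarith [mul_rpow_le_self (by norm_num) hα1 hab])
    _ ≤ (7 + logb 2 (dist a b)) * (3 * dist a b ^ α) := by
        gcongr
        linarith [logb_nonneg one_lt_two hd]
    _ = 3 * (7 + logb 2 (dist a b)) * dist a b ^ α := by ring

end Midpoint

theorem midpoint_estimate_power_perturbation_general
    {E F : Type*} [NormedAddCommGroup E] [NormedSpace ℝ E]
    [NormedAddCommGroup F] [NormedSpace ℝ F]
    (α : ℝ) (hα0 : 0 ≤ α) (hα1 : α < 1)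
    (T : E → F) (hbij : Function.Bijective T)
    (hT : ∀ x y : E, ‖T x - T y‖ ≤ ‖x - y‖ + ‖x - y‖ ^ α)
    (hTinv : ∀ f g : F, ‖Function.invFun T f - Function.invFun T g‖ ≤ ‖f - g‖ + ‖f - g‖ ^ α) :
    ∃ C > (0:ℝ), ∃ R > (0:ℝ), ∀ a b : E, R ≤ ‖a - b‖ →
      ‖T ((2:ℝ)⁻¹ • (a + b)) - (2:ℝ)⁻¹ • (T a + T b)‖ ≤ C * ‖a - b‖ ^ (1 / (2 - α)) := by
  have hαβ : α < 1 / (2 - α) := by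
    rw [lt_div_iff₀ (by linarith)]
    nlinarith
  have hR : 1 ≤ (6 : ℝ) ^ (1 - α)⁻¹ := one_le_rpow (by norm_num) (inv_nonneg.2 (by linarith))
  refine ⟨3 * (7 + 1 / ((1 / (2 - α) - α) * log 2)), by have := sub_pos.2 hαβ; positivity,
    _, by linarith, fun a b hab => ?_⟩
  have key := two_mul_dist_map_midpoint_le
    (T := ⟨T, invFun T, leftInverse_invFun hbij.1, rightInverse_invFun hbij.2⟩) hα0 hα1
    (by simpa only [dist_eq_norm, Equiv.coe_fn_mk] using hT)
    (by simpa only [dist_eq_norm, Equiv.coe_fn_symm_mk] using hTinv) (by rwa [dist_eq_norm])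
  simp only [midpoint_eq_smul_add, invOf_eq_inv, dist_eq_norm, Equiv.coe_fn_mk] at key
  calc ‖T ((2:ℝ)⁻¹ • (a + b)) - (2:ℝ)⁻¹ • (T a + T b)‖
      ≤ 2 * ‖T ((2:ℝ)⁻¹ • (a + b)) - (2:ℝ)⁻¹ • (T a + T b)‖ :=
        le_mul_of_one_le_left (norm_nonneg _) one_le_two
    _ ≤ 3 * ((7 + logb 2 ‖a - b‖) * ‖a - b‖ ^ α) := by rw [← mul_assoc]; exact key
    _ ≤ 3 * ((7 + 1 / ((1 / (2 - α) - α) * log 2)) * ‖a - b‖ ^ (1 / (2 - α))) :=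
        mul_le_mul_of_nonneg_left (add_logb_mul_rpow_le hαβ (by norm_num) (hR.trans hab))
          (by norm_num)
    _ = _ := (mul_assoc _ _ _).symm

theorem midpoint_estimate_power_perturbation
    {E F : Type*} [NormedAddCommGroup E] [NormedSpace ℝ E] [CompleteSpace E]
    [NormedAddCommGroup F] [NormedSpace ℝ F] [CompleteSpace F]
    (α : ℝ) (hα0 : 0 ≤ α) (hα1 : α < 1)
    (T : E → F) (hbij : Function.Bijective T)
    (hT : ∀ x y : E, ‖T x - T y‖ ≤ ‖x - y‖ + ‖x - y‖ ^ α)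
    (hTinv : ∀ f g : F, ‖Function.invFun T f - Function.invFun T g‖ ≤ ‖f - g‖ + ‖f - g‖ ^ α) :
    ∃ C > (0:ℝ), ∃ R > (0:ℝ), ∀ a b : E, R ≤ ‖a - b‖ →
      ‖T ((2:ℝ)⁻¹ • (a + b)) - (2:ℝ)⁻¹ • (T a + T b)‖ ≤ C * ‖a - b‖ ^ (1 / (2 - α)) :=
  midpoint_estimate_power_perturbation_general α hα0 hα1 T hbij hT hTinv
end

section
/- Let ε : ℝ≥0 → ℝ>0 be non-decreasing with ε(t) = t^α (α ∈ [0,1)) and φ(t) = t + ε(t). Then there is a constant C = C(α) such that for all t ≥ 1 and n ≥ 1, φ^n(t) ≤ C·(t^(1−α) + n)^(1/(1−α)). -/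
/-!
The substitution `u = s ^ (1 - α)` linearises the map `s ↦ s + s ^ α`: by Bernoulli's
inequality one step raises `u` by at most `1 - α`, so after `n` steps
`u ≤ t ^ (1 - α) + (1 - α) n`, and undoing the substitution gives the bound with `C = 1`.
-/

open Set

namespace Real

variable {α : ℝ}

theorem mapsTo_add_rpow_Ioi (α : ℝ) : MapsTo (fun s : ℝ => s + s ^ α) (Ioi 0) (Ioi 0) :=
  fun s (hs : 0 < s) => show 0 < s + s ^ α by positivity

theorem add_rpow_rpow_one_sub_le {s : ℝ} (hs : 0 < s) (hα0 : 0 ≤ α) (hα1 : α ≤ 1) :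
    (s + s ^ α) ^ (1 - α) ≤ s ^ (1 - α) + (1 - α) := by
  have hfactor : s + s ^ α = s * (1 + s ^ (α - 1)) := by
    rw [mul_add, mul_one, mul_comm, ← rpow_add_one hs.ne']
    norm_num
  have hbernoulli : (1 + s ^ (α - 1)) ^ (1 - α) ≤ 1 + (1 - α) * s ^ (α - 1) :=
    rpow_one_add_le_one_add_mul_self (by linarith [rpow_pos_of_pos hs (α - 1)])
      (by linarith) (by linarith)
  calc (s + s ^ α) ^ (1 - α)
      = s ^ (1 - α) * (1 + s ^ (α - 1)) ^ (1 - α) := by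
        rw [hfactor, mul_rpow hs.le (by positivity)]
    _ ≤ s ^ (1 - α) * (1 + (1 - α) * s ^ (α - 1)) := by gcongr
    _ = s ^ (1 - α) + (1 - α) * s ^ (1 - α + (α - 1)) := by
        rw [rpow_add hs]; ring
    _ = s ^ (1 - α) + (1 - α) := by norm_num

theorem iterate_add_rpow_rpow_one_sub_le {t : ℝ} (ht : 0 < t) (hα0 : 0 ≤ α) (hα1 : α ≤ 1)
    (n : ℕ) :
    ((fun s : ℝ => s + s ^ α)^[n] t) ^ (1 - α) ≤ t ^ (1 - α) + (1 - α) * n := by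
  induction n with
  | zero => simp
  | succ k ih =>
    have hpos : 0 < (fun s : ℝ => s + s ^ α)^[k] t := (mapsTo_add_rpow_Ioi α).iterate k ht
    rw [Function.iterate_succ_apply']
    calc _ ≤ ((fun s : ℝ => s + s ^ α)^[k] t) ^ (1 - α) + (1 - α) :=
          add_rpow_rpow_one_sub_le hpos hα0 hα1
      _ ≤ t ^ (1 - α) + (1 - α) * (k + 1 : ℕ) := by push_cast; linarith

end Real

theorem iterate_power_perturbation_bound
    (α : ℝ) (hα0 : 0 ≤ α) (hα1 : α < 1)
    (ε : ℝ → ℝ) (hε : ∀ t, ε t = t ^ α)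
    (φ : ℝ → ℝ) (hφ : ∀ t, φ t = t + ε t) :
    ∃ C > (0:ℝ), ∀ t ≥ (1:ℝ), ∀ n : ℕ, 1 ≤ n →
      φ^[n] t ≤ C * (t ^ (1 - α) + n) ^ (1 / (1 - α)) := by
  obtain rfl : φ = fun s => s + s ^ α := funext fun s => by rw [hφ, hε]
  have hβ : 0 < 1 - α := by linarith
  refine ⟨1, one_pos, fun t ht n _ => ?_⟩
  have ht0 : 0 < t := by linarith
  have hpos : 0 < (fun s : ℝ => s + s ^ α)^[n] t := (Real.mapsTo_add_rpow_Ioi α).iterate n ht0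
  rw [one_mul, one_div, Real.le_rpow_inv_iff_of_pos hpos.le (by positivity) hβ]
  calc _ ≤ t ^ (1 - α) + (1 - α) * n :=
        Real.iterate_add_rpow_rpow_one_sub_le ht0 hα0 hα1.le n
    _ ≤ t ^ (1 - α) + n := by
        gcongr
        exact mul_le_of_le_one_left n.cast_nonneg (by linarith)
end

section
/- Let X, Y be locally compact Hausdorff spaces, 1 < M < √2, L ≥ 0, and T : C₀(X) → C₀(Y) a bijective φ-isometry for φ(t) = Mt + L with T(0) = 0. Then for every g ∈ C₀(X), ‖Tg − T(−g)‖ ≥ (2/M)‖g‖ − L, and consequently for ‖g‖ = m with m large enough (depending on M, L; any m > 0 if L = 0) there exists y ∈ Y such that Tg(y) and T(−g)(y) have opposite signs, with Tg(y) − T(−g)(y) ≥ (2/M)m − L in absolute value, yielding |Tg(y)| ≥ (2/M − M)m − 2L and |T(−g)(y)| ≥ (2/M − M)m − 2L. -/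
/-!
Applying the coarse-Lipschitz bound of `T⁻¹` to the pair `T g`, `T (-g)` gives
`2‖g‖ = ‖g - (-g)‖ ≤ M‖T g - T (-g)‖ + L`. A function in `C₀(Y)` attains its norm, so at some
`y` the values `a = T g y`, `b = T (-g) y` satisfy `|a - b| ≥ (2/M)‖g‖ - L`, while
`|a|, |b| ≤ M‖g‖ + L` because `T 0 = 0`. Once `(2/M)‖g‖ - L` exceeds `M‖g‖ + L`, which happens for
`‖g‖ > 2L / (2/M - M)` since `M < √2`, the numbers `a` and `b` cannot have the same sign, and
`|a| ≥ |a - b| - |b|` gives the lower bounds on `|a|` and `|b|`.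
-/

open ZeroAtInfty Filter

namespace ZeroAtInftyContinuousMap

variable {α β : Type*} [TopologicalSpace α] [SeminormedAddCommGroup β]

theorem norm_apply_le_norm (f : C₀(α, β)) (x : α) : ‖f x‖ ≤ ‖f‖ :=
  f.toBCF.norm_coe_le_norm x

theorem exists_norm_apply_eq_norm (f : C₀(α, β)) (hf : 0 < ‖f‖) : ∃ x, ‖f x‖ = ‖f‖ := by
  obtain ⟨x₀, hx₀⟩ : ∃ x₀, 0 < ‖f x₀‖ := by
    by_contra! h
    exact hf.not_ge <| (BoundedContinuousFunction.norm_le le_rfl).2 h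
  have hsmall : ∀ᶠ x in cocompact α, ‖f x‖ ≤ ‖f x₀‖ := by
    have hlim := (zero_at_infty f).norm
    rw [norm_zero] at hlim
    exact (hlim.eventually_lt_const hx₀).mono fun _ => le_of_lt
  obtain ⟨x, hx⟩ := f.continuous.norm.exists_forall_ge' x₀ hsmall
  exact ⟨x, (f.norm_apply_le_norm x).antisymm
    ((BoundedContinuousFunction.norm_le (norm_nonneg _)).2 hx)⟩

end ZeroAtInftyContinuousMap

theorem mul_neg_of_abs_le_of_lt_abs_sub {a b A : ℝ} (ha : |a| ≤ A) (hb : |b| ≤ A)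
    (hab : A < |a - b|) : a * b < 0 := by
  by_contra! h
  rw [abs_le] at ha hb
  rw [lt_abs] at hab
  rcases mul_nonneg_iff.1 h with ⟨h0, h1⟩ | ⟨h0, h1⟩ <;> rcases hab with hab | hab <;> linarith

theorem two_div_mul_norm_sub_le_norm_sub_apply_neg {E F : Type*} [SeminormedAddCommGroup E]
    [NormedSpace ℝ E] [SeminormedAddCommGroup F] {T : E → F} {S : F → E} {M L : ℝ}
    (hM : 1 ≤ M) (hL : 0 ≤ L) (hST : Function.LeftInverse S T)
    (hS : ∀ u v, ‖S u - S v‖ ≤ M * ‖u - v‖ + L) (g : E) :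
    2 / M * ‖g‖ - L ≤ ‖T g - T (-g)‖ := by
  have hM0 : 0 < M := by linarith
  have hcoarse : 2 * ‖g‖ ≤ M * ‖T g - T (-g)‖ + L := by
    have h := hS (T g) (T (-g))
    rwa [hST g, hST (-g), sub_neg_eq_add, ← two_smul ℝ g, norm_smul, Real.norm_two] at h
  calc 2 / M * ‖g‖ - L ≤ 2 / M * ‖g‖ - L / M := by gcongr; exact div_le_self hL hM
    _ = (2 * ‖g‖ - L) / M := by ring
    _ ≤ ‖T g - T (-g)‖ := by rw [div_le_iff₀ hM0]; linarith

theorem C0_phi_isometry_opposite_signs_general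
    {X Y : Type*} [TopologicalSpace X]
    [TopologicalSpace Y]
    (M L : ℝ) (hM1 : 1 < M) (hM2 : M < Real.sqrt 2) (hL : 0 ≤ L)
    (T : C₀(X, ℝ) → C₀(Y, ℝ)) (hbij : Function.Bijective T) (hT0 : T 0 = 0)
    (hT : ∀ f g : C₀(X, ℝ), ‖T f - T g‖ ≤ M * ‖f - g‖ + L)
    (hTinv : ∀ u v : C₀(Y, ℝ), ‖Function.invFun T u - Function.invFun T v‖ ≤ M * ‖u - v‖ + L) :
    (∀ g : C₀(X, ℝ), (2 / M) * ‖g‖ - L ≤ ‖T g - T (-g)‖) ∧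
    ∃ m₀ : ℝ, 0 ≤ m₀ ∧ (L = 0 → m₀ = 0) ∧
      ∀ g : C₀(X, ℝ), m₀ < ‖g‖ →
        ∃ y : Y, (T g) y * (T (-g)) y < 0 ∧
          (2 / M) * ‖g‖ - L ≤ |(T g) y - (T (-g)) y| ∧
          (2 / M - M) * ‖g‖ - 2 * L ≤ |(T g) y| ∧
          (2 / M - M) * ‖g‖ - 2 * L ≤ |(T (-g)) y| := by
  have hM0 : 0 < M := by linarith
  have hgap : 0 < 2 / M - M :=
    sub_pos.2 <| (lt_div_iff₀ hM0).2 <| by nlinarith [(Real.lt_sqrt hM0.le).1 hM2]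
  have hsep := two_div_mul_norm_sub_le_norm_sub_apply_neg hM1.le hL
    (Function.leftInverse_invFun hbij.1) hTinv
  have hTnorm (f : C₀(X, ℝ)) : ‖T f‖ ≤ M * ‖f‖ + L := by simpa [hT0] using hT f 0
  refine ⟨hsep, 2 * L / (2 / M - M), by positivity, fun h => by simp [h], fun g hg => ?_⟩
  have hm : M * ‖g‖ + L < 2 / M * ‖g‖ - L := by rw [div_lt_iff₀ hgap] at hg; linarith
  obtain ⟨y, hy⟩ := (T g - T (-g)).exists_norm_apply_eq_norm <| by
    linarith [hsep g, mul_nonneg hM0.le (norm_nonneg g)]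
  have hD : 2 / M * ‖g‖ - L ≤ |T g y - T (-g) y| := by
    rw [← Real.norm_eq_abs, ← ZeroAtInftyContinuousMap.sub_apply, hy]
    exact hsep g
  have ha : |T g y| ≤ M * ‖g‖ + L := ((T g).norm_apply_le_norm y).trans (hTnorm g)
  have hb : |T (-g) y| ≤ M * ‖g‖ + L :=
    ((T (-g)).norm_apply_le_norm y).trans (by simpa using hTnorm (-g))
  refine ⟨y, mul_neg_of_abs_le_of_lt_abs_sub ha hb (hm.trans_le hD), hD, ?_, ?_⟩ <;>
    linarith [abs_sub (T g y) (T (-g) y)]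

theorem C0_phi_isometry_opposite_signs
    {X Y : Type*} [TopologicalSpace X] [LocallyCompactSpace X] [T2Space X]
    [TopologicalSpace Y] [LocallyCompactSpace Y] [T2Space Y]
    (M L : ℝ) (hM1 : 1 < M) (hM2 : M < Real.sqrt 2) (hL : 0 ≤ L)
    (T : C₀(X, ℝ) → C₀(Y, ℝ)) (hbij : Function.Bijective T) (hT0 : T 0 = 0)
    (hT : ∀ f g : C₀(X, ℝ), ‖T f - T g‖ ≤ M * ‖f - g‖ + L)
    (hTinv : ∀ u v : C₀(Y, ℝ), ‖Function.invFun T u - Function.invFun T v‖ ≤ M * ‖u - v‖ + L) :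
    (∀ g : C₀(X, ℝ), (2 / M) * ‖g‖ - L ≤ ‖T g - T (-g)‖) ∧
    ∃ m₀ : ℝ, 0 ≤ m₀ ∧ (L = 0 → m₀ = 0) ∧
      ∀ g : C₀(X, ℝ), m₀ < ‖g‖ →
        ∃ y : Y, (T g) y * (T (-g)) y < 0 ∧
          (2 / M) * ‖g‖ - L ≤ |(T g) y - (T (-g)) y| ∧
          (2 / M - M) * ‖g‖ - 2 * L ≤ |(T g) y| ∧
          (2 / M - M) * ‖g‖ - 2 * L ≤ |(T (-g)) y| :=
  C0_phi_isometry_opposite_signs_general M L hM1 hM2 hL T hbij hT0 hT hTinv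
end
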